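/- arXiv:2404.05992 — 3 statements merged into one kernel-verified Lean document; each statement's English description precedes it below -/
import Mathlib

section
/- Let G be a finite simple graph, let (M,γ) be a complete k-tree-median-decomposition of G, and let {(T_i,β_i)}_{i∈[k]} be a family of k tree-decompositions of G for which there exists an isometric embedding φ of M into T₁□⋯□T_k (π_i denoting projection onto V(T_i)) such that: (i) for every i ∈ [k] and every t ∈ V(T_i) there exists x ∈ V(M) with π_i(φ(x)) = t; (ii) for every x ∈ V(M), γ(x) = ⋂_{i∈[k]} β_i(π_i(φ(x))); and (iii) for every i ∈ [k] and every t ∈ V(T_i), β_i(t) = ⋃ { γ(x) : x ∈ V(M), π_i(φ(x)) = t }. Then for every non-edge {u,v} of G there exists i ∈ [k] such that (T_i,β_i) separates {u,v}. -/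
open SimpleGraph

/-- A graph is chordal if it contains no hole, i.e. no induced cycle of length at least four. -/
def Chordal {V : Type} (G : SimpleGraph V) : Prop :=
  ∀ n : ℕ, 4 ≤ n → IsEmpty (SimpleGraph.cycleGraph n ↪g G)

/-- `(T, β)` is a tree-decomposition of `G`. -/
structure IsTreeDecomp {V B : Type} (G : SimpleGraph V) (T : SimpleGraph B) (β : B → Set V) :
    Prop where
  isTree : T.IsTree
  exists_bag : ∀ v : V, ∃ t, v ∈ β t
  adj_bag : ∀ ⦃u v : V⦄, G.Adj u v → ∃ t, u ∈ β t ∧ v ∈ β t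
  support_connected : ∀ v : V, (T.induce {t | v ∈ β t}).Connected

/-- The chordality of `G`. -/
noncomputable def chor {V : Type} [Fintype V] (G : SimpleGraph V) : ℕ :=
  sInf {k | 0 < k ∧ ∃ H : Fin k → SimpleGraph V, (∀ i, Chordal (H i)) ∧
    ∀ u v : V, G.Adj u v ↔ ∀ i, (H i).Adj u v}

/-- The Cartesian (box) product of a family of graphs. -/
def boxProdPi {ι : Type} {B : ι → Type} (T : ∀ i, SimpleGraph (B i)) :
    SimpleGraph (∀ i, B i) where
  Adj x y := ∃ i, (T i).Adj (x i) (y i) ∧ ∀ j, j ≠ i → x j = y j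
  symm := by
    constructor
    rintro x y ⟨i, h, hj⟩
    exact ⟨i, h.symm, fun j hji => (hj j hji).symm⟩
  loopless := by
    constructor
    rintro x ⟨i, h, -⟩
    exact (T i).irrefl h

/-- The geodesic interval `I(u,v)` of a graph. -/
def geoInterval {V : Type} (G : SimpleGraph V) (u v : V) : Set V :=
  {x | G.dist u v = G.dist u x + G.dist x v}

/-- A set of vertices is (geodesically) convex. -/
def GeoConvex {V : Type} (G : SimpleGraph V) (S : Set V) : Prop :=
  ∀ u ∈ S, ∀ v ∈ S, geoInterval G u v ⊆ S

/-- A median graph. -/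
def MedianGraph {V : Type} (M : SimpleGraph V) : Prop :=
  M.Connected ∧ ∀ u v w : V,
    ∃! x, x ∈ geoInterval M u v ∩ geoInterval M u w ∩ geoInterval M v w

/-- `φ` is an isometric embedding of `G` into `H`. -/
def IsIsometricEmbedding {V W : Type} (G : SimpleGraph V) (H : SimpleGraph W)
    (φ : V → W) : Prop :=
  ∀ u v : V, H.dist (φ u) (φ v) = G.dist u v

/-- `M` has tree-dimension at most `k`. -/
def TreeDimLE {V : Type} (M : SimpleGraph V) (k : ℕ) : Prop :=
  ∃ (B : Fin k → Type) (_ : ∀ i, Fintype (B i)) (T : ∀ i, SimpleGraph (B i)),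
    (∀ i, (T i).IsTree) ∧
    ∃ φ : V → (∀ i, B i), IsIsometricEmbedding M (boxProdPi T) φ

/-- `G` has a complete `k`-tree-median-decomposition. -/
def HasCompleteTMD {V : Type} (G : SimpleGraph V) (k : ℕ) : Prop :=
  ∃ (X : Type) (_ : Fintype X) (M : SimpleGraph X) (γ : X → Set V),
    MedianGraph M ∧ TreeDimLE M k ∧
    (∀ v : V, ({x : X | v ∈ γ x}).Nonempty ∧ GeoConvex M {x : X | v ∈ γ x}) ∧
    (∀ ⦃u v : V⦄, G.Adj u v → ({x : X | u ∈ γ x} ∩ {x : X | v ∈ γ x}).Nonempty) ∧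
    (∀ x : X, G.IsClique (γ x))

/-- The tree-median-dimension of `G`. -/
noncomputable def tmd {V : Type} [Fintype V] (G : SimpleGraph V) : ℕ :=
  sInf {k | 0 < k ∧ HasCompleteTMD G k}

/-- `T` is a path graph. -/
def IsPathGraph {B : Type} (T : SimpleGraph B) : Prop :=
  ∃ n : ℕ, Nonempty (T ≃g SimpleGraph.pathGraph n)

/-- A graph is an interval graph if it can be represented by nonempty closed
intervals of the real line. -/
def IntervalGraph {V : Type} (G : SimpleGraph V) : Prop :=
  ∃ I : V → Set ℝ, (∀ v, ∃ a b : ℝ, a ≤ b ∧ I v = Set.Icc a b) ∧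
    ∀ u v : V, u ≠ v → (G.Adj u v ↔ (I u ∩ I v).Nonempty)

/-- `(T, β)` is a representation of the chordal graph `H`. -/
structure IsRepresentation {V B : Type} (H : SimpleGraph V) (T : SimpleGraph B)
    (β : B → Set V) : Prop where
  isTree : T.IsTree
  support_connected : ∀ v : V, (T.induce {t | v ∈ β t}).Connected
  adj_iff : ∀ u v : V, u ≠ v →
    (H.Adj u v ↔ ({t : B | u ∈ β t} ∩ {t : B | v ∈ β t}).Nonempty)

/-- `G` has path-width at most `k`. -/
def PathwidthLE {V : Type} (G : SimpleGraph V) (k : ℕ) : Prop :=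
  ∃ (B : Type) (_ : Fintype B) (P : SimpleGraph B) (β : B → Set V),
    IsPathGraph P ∧ IsTreeDecomp G P β ∧ ∀ t : B, (β t).ncard ≤ k + 1

/-- The radius of `T` is at most `k`. -/
def RadiusLE {B : Type} (T : SimpleGraph B) (k : ℕ) : Prop :=
  ∃ r : B, ∀ t : B, T.dist r t ≤ k

/-- The lexicographic product of two graphs. -/
def lexProd {V W : Type} (G : SimpleGraph V) (H : SimpleGraph W) :
    SimpleGraph (V × W) where
  Adj x y := G.Adj x.1 y.1 ∨ (x.1 = y.1 ∧ H.Adj x.2 y.2)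
  symm := by
    constructor
    rintro x y (h | ⟨h1, h2⟩)
    · exact Or.inl h.symm
    · exact Or.inr ⟨h1.symm, h2.symm⟩
  loopless := by
    constructor
    rintro x (h | ⟨-, h⟩) <;> exact SimpleGraph.irrefl _ h

/-!
Pick `a ∈ γ⁻¹(u)` and `b ∈ γ⁻¹(v)` at minimum distance in `M`. They differ, since bags are cliques
and `u, v` are non-adjacent, so `φ a` and `φ b` differ in some coordinate `j`. If a bag `β_j(t)`
contained both `u` and `v`, there would be `x ∈ γ⁻¹(u)` and `y ∈ γ⁻¹(v)` with `φ x j = φ y j = t`.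
In a median graph a nearest point of a convex set is a gate, so `a` lies on a geodesic from `b` to
`x`, and `b` on one from `a` to `y`. Distances in a box product are sums of coordinate distances,
so geodesics project to geodesics: in `T_j`, `φ a j` lies between `φ b j` and `t` and `φ b j`
between `φ a j` and `t`, which forces `φ a j = φ b j`.
-/

section BoxProdPi

variable {ι : Type} {B : ι → Type} (T : ∀ i, SimpleGraph (B i))

def boxProdPiUpdateHom [DecidableEq ι] (z : ∀ i, B i) (i : ι) : T i →g boxProdPi T where
  toFun := Function.update z i
  map_rel' {a b} h := ⟨i, by simpa using h, fun j hj => by simp [Function.update_of_ne hj]⟩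

@[simp]
lemma boxProdPiUpdateHom_apply [DecidableEq ι] (z : ∀ i, B i) (i : ι) (b : B i) :
    boxProdPiUpdateHom T z i b = Function.update z i b := rfl

variable {T}

lemma sum_dist_le_walk_length [Fintype ι] (hT : ∀ i, (T i).Connected)
    {z w : ∀ i, B i} (p : (boxProdPi T).Walk z w) :
    ∑ i, (T i).dist (z i) (w i) ≤ p.length := by
  induction p with
  | nil => simp
  | @cons z y w hzy p ih =>
    rw [Walk.length_cons]
    obtain ⟨j, hj, hother⟩ := hzy
    have hstep : ∑ i, (T i).dist (z i) (y i) = 1 :=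
      calc ∑ i, (T i).dist (z i) (y i) = (T j).dist (z j) (y j) :=
            Finset.sum_eq_single j (fun i _ hij => by simp [hother i hij]) (by simp)
        _ = 1 := dist_eq_one_iff_adj.mpr hj
    calc ∑ i, (T i).dist (z i) (w i)
        ≤ ∑ i, ((T i).dist (z i) (y i) + (T i).dist (y i) (w i)) :=
          Finset.sum_le_sum fun i _ => (hT i).dist_triangle
      _ = ∑ i, (T i).dist (y i) (w i) + 1 := by rw [Finset.sum_add_distrib, hstep, add_comm]
      _ ≤ p.length + 1 := by omega

lemma exists_walk_piecewise_length_le [DecidableEq ι] (hT : ∀ i, (T i).Connected)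
    (z w : ∀ i, B i) (s : Finset ι) :
    ∃ p : (boxProdPi T).Walk z (s.piecewise w z), p.length ≤ ∑ i ∈ s, (T i).dist (z i) (w i) := by
  induction s using Finset.induction_on with
  | empty => exact ⟨Walk.nil.copy rfl (Finset.piecewise_empty w z).symm, by simp⟩
  | @insert i s hi ih =>
    obtain ⟨p, hp⟩ := ih
    obtain ⟨q, hq⟩ := (hT i).exists_walk_length_eq_dist (s.piecewise w z i) (w i)
    have hzi : s.piecewise w z i = z i := Finset.piecewise_eq_of_notMem _ _ _ hi
    refine ⟨p.append ((q.map (boxProdPiUpdateHom T (s.piecewise w z) i)).copy (by simp)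
      (by rw [boxProdPiUpdateHom_apply, Finset.piecewise_insert])), ?_⟩
    rw [Walk.length_append, Walk.length_copy, Walk.length_map, hq, hzi, Finset.sum_insert hi]
    omega

lemma dist_boxProdPi [Fintype ι] (hT : ∀ i, (T i).Connected) (z w : ∀ i, B i) :
    (boxProdPi T).dist z w = ∑ i, (T i).dist (z i) (w i) := by
  classical
  obtain ⟨p, hp⟩ := exists_walk_piecewise_length_le hT z w Finset.univ
  have hle := (dist_le p).trans hp
  rw [Finset.piecewise_univ] at hle
  have hreach : (boxProdPi T).Reachable z w := Finset.piecewise_univ w z ▸ p.reachable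
  obtain ⟨q, hq⟩ := hreach.exists_walk_length_eq_dist
  exact hle.antisymm (hq ▸ sum_dist_le_walk_length hT q)

lemma mem_geoInterval_boxProdPi_iff [Fintype ι] (hT : ∀ i, (T i).Connected)
    {x y z : ∀ i, B i} :
    y ∈ geoInterval (boxProdPi T) x z ↔ ∀ i, y i ∈ geoInterval (T i) (x i) (z i) := by
  simp only [geoInterval, Set.mem_ofPred_eq, dist_boxProdPi hT, ← Finset.sum_add_distrib]
  rw [Finset.sum_eq_sum_iff_of_le fun i _ => (hT i).dist_triangle]
  simp

end BoxProdPi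

section Metric

variable {α β : Type} {G : SimpleGraph α} {H : SimpleGraph β}

lemma exists_dist_le_of_nonempty {A C : Set α} (hA : A.Nonempty) (hC : C.Nonempty) :
    ∃ a ∈ A, ∃ c ∈ C, ∀ a' ∈ A, ∀ c' ∈ C, G.dist a c ≤ G.dist a' c' := by
  let f (p : α × α) : ℕ := G.dist p.1 p.2
  obtain ⟨ha, hc⟩ := Function.argminOn_mem f _ (hA.prod hC)
  exact ⟨_, ha, _, hc, fun a' ha' c' hc' => Function.argminOn_le f _ (Set.mk_mem_prod ha' hc')⟩

lemma eq_of_mem_geoInterval_of_mem_geoInterval (hG : G.Connected) {x y t : α}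
    (hx : x ∈ geoInterval G y t) (hy : y ∈ geoInterval G x t) : x = y := by
  simp only [geoInterval, Set.mem_ofPred_eq] at hx hy
  exact hG.dist_eq_zero_iff.mp (by omega)

lemma IsIsometricEmbedding.injective {φ : α → β} (hG : G.Connected)
    (hφ : IsIsometricEmbedding G H φ) : Function.Injective φ :=
  fun x y h => hG.dist_eq_zero_iff.mp (by rw [← hφ, h, dist_self])

lemma IsIsometricEmbedding.mem_geoInterval_iff {φ : α → β} (hφ : IsIsometricEmbedding G H φ)
    {x y z : α} : φ y ∈ geoInterval H (φ x) (φ z) ↔ y ∈ geoInterval G x z := by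
  simp only [geoInterval, Set.mem_ofPred_eq]
  rw [hφ, hφ, hφ]

lemma MedianGraph.mem_geoInterval_of_forall_dist_le (hG : MedianGraph G) {A : Set α}
    (hA : GeoConvex G A) {a b x : α} (ha : a ∈ A) (hx : x ∈ A)
    (hmin : ∀ a' ∈ A, G.dist b a ≤ G.dist b a') : a ∈ geoInterval G b x := by
  -- the median of `b, a, x` lies in `A` and between `b` and `a`, so minimality forces it to be `a`
  obtain ⟨m, ⟨⟨hba, hbx⟩, hax⟩, -⟩ := hG.2 b a x
  have hm := hmin m (hA a ha x hx hax)
  have hma : m = a := hG.1.dist_eq_zero_iff.mp (by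
    simp only [geoInterval, Set.mem_ofPred_eq] at hba
    omega)
  exact hma ▸ hbx

end Metric

theorem stmt_9_general {V : Type} (G : SimpleGraph V) (k : ℕ)
    (X : Type) (M : SimpleGraph X) (γ : X → Set V)
    (hM : MedianGraph M)
    (hsupp : ∀ v : V, ({x : X | v ∈ γ x}).Nonempty ∧ GeoConvex M {x : X | v ∈ γ x})
    (hclique : ∀ x : X, G.IsClique (γ x))
    (B : Fin k → Type)
    (T : ∀ i, SimpleGraph (B i)) (β : ∀ i, B i → Set V)
    (hTD : ∀ i, IsTreeDecomp G (T i) (β i))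
    (φ : X → ∀ i, B i) (hφ : IsIsometricEmbedding M (boxProdPi T) φ)
    (hbeta : ∀ (i : Fin k) (t : B i), β i t = ⋃ x ∈ {x : X | φ x i = t}, γ x) :
    ∀ u v : V, u ≠ v → ¬ G.Adj u v →
      ∃ i, ∀ t, ¬ (u ∈ β i t ∧ v ∈ β i t) := by
  intro u v huv hnadj
  have hT : ∀ i, (T i).Connected := fun i => (hTD i).isTree.connected
  obtain ⟨a, ha, b, hb, hmin⟩ := exists_dist_le_of_nonempty (G := M) (hsupp u).1 (hsupp v).1
  have hab : a ≠ b := by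
    rintro rfl
    exact hnadj (hclique a ha hb huv)
  obtain ⟨j, hj⟩ := Function.ne_iff.mp ((hφ.injective hM.1).ne hab)
  refine ⟨j, fun t ⟨hut, hvt⟩ => hj ?_⟩
  simp only [hbeta, Set.mem_ofPred_eq, Set.mem_iUnion, exists_prop] at hut hvt
  obtain ⟨x, rfl, hux⟩ := hut
  obtain ⟨y, hyx, hvy⟩ := hvt
  have hax : a ∈ geoInterval M b x := hM.mem_geoInterval_of_forall_dist_le (hsupp u).2 ha hux
    fun a' ha' => by simpa only [dist_comm (u := b)] using hmin a' ha' b hb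
  have hby : b ∈ geoInterval M a y :=
    hM.mem_geoInterval_of_forall_dist_le (hsupp v).2 hb hvy fun b' hb' => hmin a ha b' hb'
  have haj := (mem_geoInterval_boxProdPi_iff hT).mp (hφ.mem_geoInterval_iff.mpr hax) j
  have hbj := (mem_geoInterval_boxProdPi_iff hT).mp (hφ.mem_geoInterval_iff.mpr hby) j
  rw [hyx] at hbj
  exact eq_of_mem_geoInterval_of_mem_geoInterval (hT j) haj hbj

/-- Given a complete `k`-tree-median-decomposition `(M,γ)` of `G` and a family
of `k` tree-decompositions obtained from it via an isometric embedding as in Stavropoulos'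
theorem, the family is non-edge-separating. -/
theorem stmt_9 {V : Type} [Fintype V] (G : SimpleGraph V) (k : ℕ)
    (X : Type) [Fintype X] (M : SimpleGraph X) (γ : X → Set V)
    (hM : MedianGraph M)
    (hsupp : ∀ v : V, ({x : X | v ∈ γ x}).Nonempty ∧ GeoConvex M {x : X | v ∈ γ x})
    (hadjbag : ∀ ⦃u v : V⦄, G.Adj u v →
      ({x : X | u ∈ γ x} ∩ {x : X | v ∈ γ x}).Nonempty)
    (hclique : ∀ x : X, G.IsClique (γ x))
    (B : Fin k → Type) (Bfin : ∀ i, Fintype (B i))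
    (T : ∀ i, SimpleGraph (B i)) (β : ∀ i, B i → Set V)
    (hTD : ∀ i, IsTreeDecomp G (T i) (β i))
    (φ : X → ∀ i, B i) (hφ : IsIsometricEmbedding M (boxProdPi T) φ)
    (hsurj : ∀ (i : Fin k) (t : B i), ∃ x : X, φ x i = t)
    (hgamma : ∀ x : X, γ x = ⋂ i, β i (φ x i))
    (hbeta : ∀ (i : Fin k) (t : B i), β i t = ⋃ x ∈ {x : X | φ x i = t}, γ x) :
    ∀ u v : V, u ≠ v → ¬ G.Adj u v →
      ∃ i, ∀ t, ¬ (u ∈ β i t ∧ v ∈ β i t) :=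
  stmt_9_general G k X M γ hM hsupp hclique B T β hTD φ hφ hbeta
end

section
/- Let G be a finite simple graph with at least one non-edge. Then the following three quantities are equal: (a) the minimum positive integer k such that G is the intersection of k interval graphs on V(G); (b) the minimum cardinality of a non-edge-separating family of path-decompositions of G; (c) the minimum positive integer k for which there exist finite paths P₁,…,P_k and an assignment to each vertex v of G of a nonempty convex set S_v of vertices of the Cartesian product P₁□⋯□P_k such that two distinct vertices u,v of G are adjacent if and only if S_u ∩ S_v ≠ ∅. -/
open SimpleGraph

/-!
Each of the three quantities is the least `k > 0` for which `G` has a discrete box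
representation: vertex `v` gets an interval `[a i v, b i v]` of `Fin (N i)` in every coordinate
`i < k`, and distinct vertices are adjacent iff their intervals meet in every coordinate.

For interval graphs, the finitely many real endpoints may be replaced by their ranks. In a
path-decomposition the bags containing a vertex form an interval of the path, two vertices share
a bag iff their intervals meet, and a non-edge is separated exactly in the coordinates where its
intervals are disjoint; conversely, intervals of a path define a path-decomposition. In a
Cartesian product of paths, distances add up over the coordinates, so a convex set is the
product of its projections, each of which is an interval of a path, and two such boxes meet iff
all their projections do. A non-edge rules out `k = 0`.
-/

open Set

theorem Set.Icc_inter_Icc_nonempty_iff {α : Type*} [LinearOrder α] {a b c d : α}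
    (hab : a ≤ b) (hcd : c ≤ d) : (Icc a b ∩ Icc c d).Nonempty ↔ a ≤ d ∧ c ≤ b := by
  rw [Icc_inter_Icc, nonempty_Icc]
  simp only [sup_le_iff, le_inf_iff]
  tauto

theorem Set.OrdConnected.exists_eq_Icc {α : Type*} [LinearOrder α] {s : Set α}
    (hs : s.OrdConnected) (hne : s.Nonempty) (hfin : s.Finite) :
    ∃ a b, a ≤ b ∧ s = Icc a b := by
  obtain ⟨a, ha, hmin⟩ := s.exists_min_image id hfin hne
  obtain ⟨b, hb, hmax⟩ := s.exists_max_image id hfin hne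
  exact ⟨a, b, hmin b hb,
    Subset.antisymm (fun x hx => ⟨hmin x hx, hmax x hx⟩) (hs.out ha hb)⟩

theorem Fin.exists_endpoints_of_ordConnected {V : Type*} {n : ℕ} (s : V → Set (Fin n))
    (hne : ∀ v, (s v).Nonempty) (hs : ∀ v, (s v).OrdConnected) :
    ∃ a b : V → Fin n, (∀ v, a v ≤ b v) ∧
      ∀ u v, (s u ∩ s v).Nonempty ↔ a u ≤ b v ∧ a v ≤ b u := by
  choose a b hab hs using fun v => (hs v).exists_eq_Icc (hne v) (toFinite _)
  exact ⟨a, b, hab, fun u v => by rw [hs u, hs v, Icc_inter_Icc_nonempty_iff (hab u) (hab v)]⟩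

theorem exists_fin_le_iff_le {W α : Type*} [Fintype W] [LinearOrder α] (f : W → α) :
    ∃ (N : ℕ) (g : W → Fin N), ∀ x y, g x ≤ g y ↔ f x ≤ f y := by
  classical
  let e := (Finset.univ.image f).orderIsoOfFin rfl
  refine ⟨_, fun x => e.symm ⟨f x, Finset.mem_image_of_mem f (Finset.mem_univ x)⟩,
    fun x y => ?_⟩
  rw [e.symm.le_iff_le, Subtype.mk_le_mk]

namespace SimpleGraph

section PathGraph

variable {n : ℕ}

theorem pathGraph_walk_mem_edges {u v : Fin n} (W : (pathGraph n).Walk u v) {x y : Fin n}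
    (hxy : x.val + 1 = y.val) (hux : u ≤ x) (hyv : y ≤ v) : s(x, y) ∈ W.edges := by
  induction W with
  | nil => exact absurd (hux.trans_lt (Fin.lt_def.mpr (by omega))) hyv.not_gt
  | @cons a b c hab W ih =>
    rw [Walk.edges_cons, List.mem_cons]
    by_cases hbx : b ≤ x
    · exact Or.inr (ih hbx hyv)
    · rw [pathGraph_adj] at hab
      rw [Fin.le_def] at hux hbx
      left
      rw [show a = x from Fin.ext (by omega), show b = y from Fin.ext (by omega)]

theorem pathGraph_walk_mem_support {u v : Fin n} (W : (pathGraph n).Walk u v) {x : Fin n}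
    (hx : x ∈ uIcc u v) : x ∈ W.support := by
  wlog huv : u ≤ v generalizing u v
  · simpa using this W.reverse (uIcc_comm u v ▸ hx) (le_of_not_ge huv)
  rw [uIcc_of_le huv] at hx
  rcases hx.2.eq_or_lt with rfl | hxv
  · exact W.end_mem_support
  · exact W.fst_mem_support_of_mem_edges
      (pathGraph_walk_mem_edges W (y := ⟨x + 1, by omega⟩) rfl hx.1 (Fin.le_def.mpr hxv))

theorem pathGraph_isAcyclic (n : ℕ) : (pathGraph n).IsAcyclic := by
  refine isAcyclic_iff_forall_adj_isBridge.mpr fun x y hxy => ?_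
  rw [isBridge_iff_forall_walk_mem_edges]
  intro W
  rcases pathGraph_adj.mp hxy with h | h
  · exact pathGraph_walk_mem_edges W h le_rfl le_rfl
  · simpa [Sym2.eq_swap] using pathGraph_walk_mem_edges W.reverse h le_rfl le_rfl

theorem pathGraph_isTree (hn : 0 < n) : (pathGraph n).IsTree where
  connected := { preconnected := pathGraph_preconnected n, nonempty := ⟨⟨0, hn⟩⟩ }
  isAcyclic := pathGraph_isAcyclic n

theorem pathGraph_dist_le_length {u v : Fin n} (W : (pathGraph n).Walk u v) :
    Nat.dist u v ≤ W.length := by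
  induction W with
  | nil => simp
  | @cons a b c hab W ih =>
    have := Nat.dist.triangle_inequality a b c
    rcases pathGraph_adj.mp hab with h | h <;>
      simp only [Walk.length_cons, Nat.dist] at * <;> omega

theorem pathGraph_dist_le {u v : Fin n} (huv : u ≤ v) :
    (pathGraph n).dist u v ≤ v.val - u.val := by
  obtain ⟨d, hd⟩ : ∃ d, v.val = u.val + d := ⟨v.val - u.val, by omega⟩
  induction d generalizing v with
  | zero => rw [show v = u from Fin.ext (by omega), dist_self]; exact Nat.zero_le _
  | succ d ih =>
    let w : Fin n := ⟨u + d, by omega⟩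
    have hwv : (pathGraph n).Adj w v := pathGraph_adj.mpr (Or.inl (by simp [w]; omega))
    calc (pathGraph n).dist u v ≤ (pathGraph n).dist u w + (pathGraph n).dist w v :=
          (pathGraph_preconnected n u w).dist_triangle_left v
      _ ≤ (w.val - u.val) + 1 := by
          gcongr
          · exact ih (Fin.le_def.mpr (by simp [w])) rfl
          · exact (dist_eq_one_iff_adj.mpr hwv).le
      _ = v.val - u.val := by simp [w]; omega

theorem pathGraph_dist (u v : Fin n) : (pathGraph n).dist u v = Nat.dist u v := by
  refine le_antisymm ?_ ?_
  · rcases le_total u v with huv | hvu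
    · simpa [Nat.dist, Nat.sub_eq_zero_of_le (Fin.le_def.mp huv)] using pathGraph_dist_le huv
    · simpa [dist_comm, Nat.dist, Nat.sub_eq_zero_of_le (Fin.le_def.mp hvu)] using
        pathGraph_dist_le hvu
  · obtain ⟨W, hW⟩ := (pathGraph_preconnected n u v).exists_walk_length_eq_dist
    exact hW ▸ pathGraph_dist_le_length W

theorem geoInterval_pathGraph (u v : Fin n) : geoInterval (pathGraph n) u v = uIcc u v := by
  ext x
  simp only [geoInterval, mem_ofPred_eq, pathGraph_dist, mem_uIcc, Fin.le_def, Nat.dist]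
  omega

theorem geoConvex_pathGraph_iff {s : Set (Fin n)} :
    GeoConvex (pathGraph n) s ↔ s.OrdConnected := by
  simp only [ordConnected_iff_uIcc_subset, GeoConvex, geoInterval_pathGraph]

theorem pathGraph_induce_preconnected_iff {s : Set (Fin n)} :
    ((pathGraph n).induce s).Preconnected ↔ s.OrdConnected := by
  refine ⟨fun h => ordConnected_iff_uIcc_subset.mpr fun u hu v hv x hx => ?_, fun h => ?_⟩
  · obtain ⟨W⟩ := h ⟨u, hu⟩ ⟨v, hv⟩
    have := pathGraph_walk_mem_support (W.map (Embedding.induce s).toHom) hx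
    rw [Walk.support_map, List.mem_map] at this
    obtain ⟨y, -, rfl⟩ := this
    exact y.2
  · suffices ∀ u v : s, u ≤ v → ((pathGraph n).induce s).Reachable u v from fun u v =>
      (le_total u v).elim (this u v) fun hvu => (this v u hvu).symm
    intro u v huv
    rw [← Subtype.coe_le_coe, Fin.le_def] at huv
    obtain ⟨d, hd⟩ : ∃ d, (v : Fin n).val = (u : Fin n).val + d := ⟨v.1 - u.1, by omega⟩
    induction d generalizing v with
    | zero => rw [show v = u from Subtype.ext (Fin.ext (by omega))]
    | succ d ih =>
      let w : s := ⟨⟨u.1 + d, by omega⟩,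
        h.out u.2 v.2 ⟨Fin.le_def.mpr (by simp), Fin.le_def.mpr (by simp; omega)⟩⟩
      exact (ih w (by simp [w]) rfl).trans
        (Adj.reachable (pathGraph_adj.mpr (Or.inl (by simp [w]; omega))))

end PathGraph

section Maps

variable {V W : Type*} {G : SimpleGraph V} {H : SimpleGraph W}

theorem Preconnected.induce_image (f : G →g H) {s : Set V} (h : (G.induce s).Preconnected) :
    (H.induce (f '' s)).Preconnected :=
  h.map (induceHom f (mapsTo_image f s)) fun ⟨_, x, hx, hfx⟩ =>
    ⟨⟨x, hx⟩, Subtype.ext hfx⟩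

theorem Hom.dist_le (f : G →g H) {u v : V} (h : G.Reachable u v) :
    H.dist (f u) (f v) ≤ G.dist u v := by
  obtain ⟨w, hw⟩ := h.exists_walk_length_eq_dist
  exact hw ▸ (w.length_map f).symm ▸ SimpleGraph.dist_le (w.map f)

theorem Iso.dist_eq (e : G ≃g H) (u v : V) : H.dist (e u) (e v) = G.dist u v := by
  by_cases h : G.Reachable u v
  · refine le_antisymm (e.toHom.dist_le h) ?_
    simpa using e.symm.toHom.dist_le (Iso.reachable_iff.mpr h : H.Reachable (e u) (e v))
  · rw [dist_eq_zero_of_not_reachable h,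
      dist_eq_zero_of_not_reachable (mt Iso.reachable_iff.mp h)]

end Maps

end SimpleGraph

theorem left_mem_geoInterval {V : Type} (G : SimpleGraph V) (u v : V) :
    u ∈ geoInterval G u v := by
  simp [geoInterval]

theorem right_mem_geoInterval {V : Type} (G : SimpleGraph V) (u v : V) :
    v ∈ geoInterval G u v := by
  simp [geoInterval]

theorem GeoConvex.image_iso {V W : Type} {G : SimpleGraph V} {H : SimpleGraph W} (e : G ≃g H)
    {s : Set V} (hs : GeoConvex G s) : GeoConvex H (⇑e '' s) := by
  rintro _ ⟨u, hu, rfl⟩ _ ⟨v, hv, rfl⟩ x hx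
  refine ⟨e.symm x, hs u hu v hv ?_, e.apply_symm_apply x⟩
  simp only [geoInterval, mem_ofPred_eq] at hx ⊢
  rwa [← e.dist_eq, ← e.dist_eq, ← e.dist_eq, e.apply_symm_apply]

section BoxProdPi

variable {ι : Type} {B : ι → Type} {T : ∀ i, SimpleGraph (B i)}

def boxProdPiUpdate [DecidableEq ι] (x : ∀ i, B i) (i : ι) : T i →g boxProdPi T where
  toFun := Function.update x i
  map_rel' h := ⟨i, by simpa using h, fun j hj => by simp [hj]⟩

variable [Fintype ι]

theorem boxProdPi_exists_walk_length_le (hT : ∀ i, (T i).Preconnected) (x y : ∀ i, B i) :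
    ∃ W : (boxProdPi T).Walk x y, W.length ≤ ∑ i, (T i).dist (x i) (y i) := by
  classical
  suffices ∀ s : Finset ι, ∃ W : (boxProdPi T).Walk x (s.piecewise y x),
      W.length ≤ ∑ i ∈ s, (T i).dist (x i) (y i) by
    obtain ⟨W, hW⟩ := this Finset.univ
    exact ⟨W.copy rfl (Finset.piecewise_univ y x), by simpa using hW⟩
  intro s
  induction s using Finset.induction_on with
  | empty => exact ⟨(Walk.nil : (boxProdPi T).Walk x x).copy rfl (by simp), by simp⟩
  | @insert j s hj ih =>
    obtain ⟨W, hW⟩ := ih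
    obtain ⟨w, hw⟩ := (hT j (x j) (y j)).exists_walk_length_eq_dist
    let z := s.piecewise y x
    have hstart : boxProdPiUpdate (T := T) z j (x j) = z :=
      Function.update_eq_self_iff.mpr (Finset.piecewise_eq_of_notMem _ _ _ hj).symm
    have hend : boxProdPiUpdate (T := T) z j (y j) = (insert j s).piecewise y x :=
      (Finset.piecewise_insert ..).symm
    refine ⟨W.append ((w.map (boxProdPiUpdate z j)).copy hstart hend), ?_⟩
    rw [Walk.length_append, Walk.length_copy, Walk.length_map, hw, Finset.sum_insert hj]
    omega

theorem boxProdPi_sum_dist_le_length {x y : ∀ i, B i} (W : (boxProdPi T).Walk x y) :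
    ∑ i, (T i).dist (x i) (y i) ≤ W.length := by
  induction W with
  | nil => simp
  | @cons a b c hab W ih =>
    have ⟨i₀, hadj, heq⟩ := hab
    have hreach : ∀ i, (T i).Reachable (a i) (b i) := fun i => by
      by_cases hi : i = i₀
      · exact hi ▸ hadj.reachable
      · exact heq i hi ▸ Reachable.refl _
    calc ∑ i, (T i).dist (a i) (c i)
        ≤ ∑ i, ((T i).dist (a i) (b i) + (T i).dist (b i) (c i)) :=
          Finset.sum_le_sum fun i _ => (hreach i).dist_triangle_left (c i)
      _ = 1 + ∑ i, (T i).dist (b i) (c i) := by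
          rw [Finset.sum_add_distrib, Finset.sum_eq_single i₀ (fun i _ hi => by simp [heq i hi])
            (by simp), dist_eq_one_iff_adj.mpr hadj]
      _ ≤ (Walk.cons hab W).length := by rw [Walk.length_cons]; omega

theorem boxProdPi_dist (hT : ∀ i, (T i).Preconnected) (x y : ∀ i, B i) :
    (boxProdPi T).dist x y = ∑ i, (T i).dist (x i) (y i) := by
  obtain ⟨W, hW⟩ := boxProdPi_exists_walk_length_le hT x y
  refine le_antisymm ((dist_le W).trans hW) ?_
  obtain ⟨W', hW'⟩ := (Walk.reachable W).exists_walk_length_eq_dist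
  exact hW' ▸ boxProdPi_sum_dist_le_length W'

theorem mem_geoInterval_boxProdPi (hT : ∀ i, (T i).Preconnected) {u v x : ∀ i, B i} :
    x ∈ geoInterval (boxProdPi T) u v ↔ ∀ i, x i ∈ geoInterval (T i) (u i) (v i) := by
  simp only [geoInterval, mem_ofPred_eq, boxProdPi_dist hT, ← Finset.sum_add_distrib]
  rw [Finset.sum_eq_sum_iff_of_le fun i _ => (hT i (u i) (x i)).dist_triangle_left (v i)]
  simp

theorem update_mem_geoInterval_boxProdPi [DecidableEq ι] (hT : ∀ i, (T i).Preconnected)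
    {x y : ∀ i, B i} {i : ι} {t : B i} (ht : t ∈ geoInterval (T i) (x i) (y i)) :
    Function.update x i t ∈ geoInterval (boxProdPi T) x y := by
  refine (mem_geoInterval_boxProdPi hT).mpr fun j => ?_
  rcases eq_or_ne j i with rfl | hj
  · simpa using ht
  · simpa [hj] using left_mem_geoInterval (T j) (x j) (y j)

theorem GeoConvex.pi (hT : ∀ i, (T i).Preconnected) {s : ∀ i, Set (B i)}
    (hs : ∀ i, GeoConvex (T i) (s i)) : GeoConvex (boxProdPi T) (univ.pi s) :=
  fun _ hu _ hv _ hx i _ =>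
    hs i _ (hu i trivial) _ (hv i trivial) ((mem_geoInterval_boxProdPi hT).mp hx i)

variable {S S' : Set (∀ i, B i)}

theorem GeoConvex.image_eval (hT : ∀ i, (T i).Preconnected) (hS : GeoConvex (boxProdPi T) S)
    (i : ι) : GeoConvex (T i) (Function.eval i '' S) := by
  classical
  rintro _ ⟨x, hx, rfl⟩ _ ⟨y, hy, rfl⟩ t ht
  exact ⟨_, hS x hx y hy (update_mem_geoInterval_boxProdPi hT ht), Function.update_self ..⟩

theorem GeoConvex.eq_pi_image_eval (hT : ∀ i, (T i).Preconnected)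
    (hS : GeoConvex (boxProdPi T) S) (hne : S.Nonempty) :
    S = univ.pi fun i => Function.eval i '' S := by
  classical
  refine (subset_pi_eval_image univ S).antisymm fun p hp => ?_
  suffices ∀ s : Finset ι, ∃ y ∈ S, ∀ i ∈ s, y i = p i by
    obtain ⟨y, hy, hyp⟩ := this Finset.univ
    exact funext (fun i => hyp i (Finset.mem_univ i)) ▸ hy
  intro s
  induction s using Finset.induction_on with
  | empty => exact ⟨hne.some, hne.some_mem, by simp⟩
  | @insert j s _ ih =>
    obtain ⟨y, hy, hyp⟩ := ih
    obtain ⟨x, hx, hxp⟩ := hp j trivial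
    refine ⟨Function.update y j (x j),
      hS y hy x hx (update_mem_geoInterval_boxProdPi hT (right_mem_geoInterval ..)), ?_⟩
    intro i hi
    rcases eq_or_ne i j with rfl | hij
    · simpa using hxp
    · simpa [hij] using hyp i (Finset.mem_of_mem_insert_of_ne hi hij)

theorem GeoConvex.inter_nonempty_iff (hT : ∀ i, (T i).Preconnected)
    (hS : GeoConvex (boxProdPi T) S) (hS' : GeoConvex (boxProdPi T) S') (hne : S.Nonempty)
    (hne' : S'.Nonempty) :
    (S ∩ S').Nonempty ↔ ∀ i, (Function.eval i '' S ∩ Function.eval i '' S').Nonempty := by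
  rw [← univ_pi_nonempty_iff, pi_inter_distrib, ← hS.eq_pi_image_eval hT hne,
    ← hS'.eq_pi_image_eval hT hne']

end BoxProdPi

section Intervals

variable {V P : Type} {T : SimpleGraph P}

theorem IsPathGraph.preconnected (hT : IsPathGraph T) : T.Preconnected :=
  have ⟨n, ⟨e⟩⟩ := hT
  e.preconnected_iff.mpr (pathGraph_preconnected n)

theorem IsPathGraph.exists_fin (hT : IsPathGraph T) (s : V → Set P) (hne : ∀ v, (s v).Nonempty)
    (hs : ∀ {n} (e : T ≃g pathGraph n) v, (⇑e '' s v).OrdConnected) :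
    ∃ (N : ℕ) (a b : V → Fin N), (∀ v, a v ≤ b v) ∧
      ∀ u v, (s u ∩ s v).Nonempty ↔ a u ≤ b v ∧ a v ≤ b u := by
  obtain ⟨n, ⟨e⟩⟩ := hT
  obtain ⟨a, b, hab, hov⟩ :=
    Fin.exists_endpoints_of_ordConnected (fun v => e '' s v) (fun v => (hne v).image e) (hs e)
  refine ⟨n, a, b, hab, fun u v => ?_⟩
  rw [← hov, ← image_inter e.injective, image_nonempty]

theorem IntervalGraph.exists_fin [Fintype V] {H : SimpleGraph V} (h : IntervalGraph H) :
    ∃ (N : ℕ) (a b : V → Fin N), (∀ v, a v ≤ b v) ∧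
      ∀ u v, u ≠ v → (H.Adj u v ↔ a u ≤ b v ∧ a v ≤ b u) := by
  obtain ⟨I, hI, hH⟩ := h
  choose l r hlr hI using hI
  obtain ⟨N, g, hg⟩ := exists_fin_le_iff_le (Sum.elim l r)
  refine ⟨N, g ∘ Sum.inl, g ∘ Sum.inr, fun v => (hg _ _).mpr (hlr v), fun u v huv => ?_⟩
  simp only [Function.comp, hg, Sum.elim_inl, Sum.elim_inr]
  rw [hH u v huv, hI, hI, Icc_inter_Icc_nonempty_iff (hlr u) (hlr v)]

end Intervals

namespace SimpleGraph

variable {V : Type} {G : SimpleGraph V}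

def HasBoxRep (G : SimpleGraph V) (k : ℕ) : Prop :=
  ∃ (N : Fin k → ℕ) (a b : ∀ i, V → Fin (N i)), (∀ i v, a i v ≤ b i v) ∧
    ∀ u v, u ≠ v → (G.Adj u v ↔ ∀ i, a i u ≤ b i v ∧ a i v ≤ b i u)

theorem HasBoxRep.pos {k : ℕ} (h : G.HasBoxRep k) (hne : ∃ u v, u ≠ v ∧ ¬G.Adj u v) :
    0 < k := by
  obtain ⟨N, a, b, -, hG⟩ := h
  obtain ⟨u, v, huv, hnadj⟩ := hne
  refine Nat.pos_of_ne_zero ?_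
  rintro rfl
  exact hnadj ((hG u v huv).mpr finZeroElim)

def overlapGraph {α : Type*} [Preorder α] (a b : V → α) : SimpleGraph V where
  Adj u v := u ≠ v ∧ a u ≤ b v ∧ a v ≤ b u
  symm := ⟨fun _ _ h => ⟨h.1.symm, h.2.2, h.2.1⟩⟩
  loopless := ⟨fun _ h => h.1 rfl⟩

theorem intervalGraph_overlapGraph {N : ℕ} (a b : V → Fin N) (hab : ∀ v, a v ≤ b v) :
    IntervalGraph (overlapGraph a b) := by
  refine ⟨fun v => Icc ((a v : ℕ) : ℝ) ((b v : ℕ) : ℝ), fun v => ⟨_, _, ?_, rfl⟩,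
    fun u v huv => ?_⟩
  · exact_mod_cast hab v
  · rw [Icc_inter_Icc_nonempty_iff (by exact_mod_cast hab u) (by exact_mod_cast hab v)]
    change u ≠ v ∧ a u ≤ b v ∧ a v ≤ b u ↔ _
    simp only [Fin.le_def, Nat.cast_le, ne_eq, huv, not_false_eq_true, true_and]

theorem exists_intervalGraphs_iff_hasBoxRep [Fintype V] {k : ℕ} (hk : 0 < k) :
    (∃ H : Fin k → SimpleGraph V, (∀ i, IntervalGraph (H i)) ∧
      ∀ u v, G.Adj u v ↔ ∀ i, (H i).Adj u v) ↔ G.HasBoxRep k := by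
  constructor
  · rintro ⟨H, hH, hG⟩
    choose N a b hab hHab using fun i => (hH i).exists_fin
    exact ⟨N, a, b, hab, fun u v huv => (hG u v).trans (forall_congr' fun i => hHab i u v huv)⟩
  · rintro ⟨N, a, b, hab, hG⟩
    refine ⟨fun i => overlapGraph (a i) (b i), fun i => intervalGraph_overlapGraph _ _ (hab i),
      fun u v => ?_⟩
    rcases eq_or_ne u v with rfl | huv
    · exact iff_of_false G.irrefl fun h => (h ⟨0, hk⟩).1 rfl
    · simp [overlapGraph, huv, hG u v huv]

theorem isTreeDecomp_pathGraph [Nonempty V] {N : ℕ} (a b : V → Fin N) (hab : ∀ v, a v ≤ b v)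
    (hadj : ∀ u v, G.Adj u v → a u ≤ b v ∧ a v ≤ b u) :
    IsTreeDecomp G (pathGraph N) fun t => {v | t ∈ Icc (a v) (b v)} where
  isTree := pathGraph_isTree (a (Classical.arbitrary V)).pos
  exists_bag v := ⟨a v, le_rfl, hab v⟩
  adj_bag u v h := (Icc_inter_Icc_nonempty_iff (hab u) (hab v)).mpr (hadj u v h)
  support_connected v :=
    { preconnected := pathGraph_induce_preconnected_iff.mpr ordConnected_Icc
      nonempty := (nonempty_Icc.mpr (hab v)).to_subtype }

theorem exists_pathDecomps_iff_hasBoxRep [Nonempty V] {k : ℕ} :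
    (∃ (B : Fin k → Type) (_ : ∀ i, Fintype (B i)) (T : ∀ i, SimpleGraph (B i))
      (β : ∀ i, B i → Set V), (∀ i, IsTreeDecomp G (T i) (β i) ∧ IsPathGraph (T i)) ∧
        ∀ u v, u ≠ v → ¬G.Adj u v → ∃ i, ∀ t, ¬(u ∈ β i t ∧ v ∈ β i t)) ↔
      G.HasBoxRep k := by
  constructor
  · rintro ⟨B, -, T, β, hdec, hsep⟩
    choose N a b hab hov using fun i => (hdec i).2.exists_fin (fun v => {t | v ∈ β i t})
      (fun v => (hdec i).1.exists_bag v) fun e v => pathGraph_induce_preconnected_iff.mp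
        (((hdec i).1.support_connected v).preconnected.induce_image e.toHom)
    refine ⟨N, a, b, hab, fun u v huv =>
      ⟨fun h i => (hov i u v).mp ((hdec i).1.adj_bag h), fun h => ?_⟩⟩
    by_contra hnadj
    obtain ⟨i, hi⟩ := hsep u v huv hnadj
    obtain ⟨t, ht⟩ := (hov i u v).mpr (h i)
    exact hi t ht
  · rintro ⟨N, a, b, hab, hG⟩
    refine ⟨fun i => Fin (N i), inferInstance, fun i => pathGraph (N i),
      fun i t => {v | t ∈ Icc (a i v) (b i v)}, fun i => ⟨isTreeDecomp_pathGraph _ _ (hab i)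
        fun u v h => (hG u v h.ne).mp h i, N i, ⟨Iso.refl⟩⟩, fun u v huv hnadj => ?_⟩
    obtain ⟨i, hi⟩ := not_forall.mp (mt (hG u v huv).mpr hnadj)
    exact ⟨i, fun t ht => hi ((Icc_inter_Icc_nonempty_iff (hab i u) (hab i v)).mp ⟨t, ht⟩)⟩

theorem exists_convexSets_iff_hasBoxRep {k : ℕ} :
    (∃ (B : Fin k → Type) (_ : ∀ i, Fintype (B i)) (T : ∀ i, SimpleGraph (B i))
      (S : V → Set (∀ i, B i)), (∀ i, IsPathGraph (T i)) ∧
        (∀ v, (S v).Nonempty ∧ GeoConvex (boxProdPi T) (S v)) ∧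
        ∀ u v, u ≠ v → (G.Adj u v ↔ (S u ∩ S v).Nonempty)) ↔ G.HasBoxRep k := by
  constructor
  · rintro ⟨B, -, T, S, hpath, hS, hG⟩
    have hT i := (hpath i).preconnected
    choose N a b hab hov using fun i => (hpath i).exists_fin (fun v => Function.eval i '' S v)
      (fun v => (hS v).1.image _) fun e v =>
        geoConvex_pathGraph_iff.mp (((hS v).2.image_eval hT i).image_iso e)
    refine ⟨N, a, b, hab, fun u v huv => ?_⟩
    rw [hG u v huv, GeoConvex.inter_nonempty_iff hT (hS u).2 (hS v).2 (hS u).1 (hS v).1]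
    exact forall_congr' fun i => hov i u v
  · rintro ⟨N, a, b, hab, hG⟩
    refine ⟨fun i => Fin (N i), inferInstance, fun i => pathGraph (N i),
      fun v => univ.pi fun i => Icc (a i v) (b i v), fun i => ⟨N i, ⟨Iso.refl⟩⟩,
      fun v => ⟨univ_pi_nonempty_iff.mpr fun i => nonempty_Icc.mpr (hab i v),
        GeoConvex.pi (fun i => pathGraph_preconnected _)
          fun i => geoConvex_pathGraph_iff.mpr ordConnected_Icc⟩, fun u v huv => ?_⟩
    rw [hG u v huv, ← pi_inter_distrib, univ_pi_nonempty_iff]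
    exact forall_congr' fun i => (Icc_inter_Icc_nonempty_iff (hab i u) (hab i v)).symm

end SimpleGraph

/-- For a finite graph with at least one non-edge, the boxicity (minimum
number of interval graphs whose intersection is `G`) equals the minimum cardinality of a
non-edge-separating family of path-decompositions of `G`, and equals the minimum `k` such
that `G` is the intersection graph of nonempty convex sets of a Cartesian product of
`k` paths. -/
theorem stmt_10 {V : Type} [Fintype V] (G : SimpleGraph V)
    (hne : ∃ u v : V, u ≠ v ∧ ¬ G.Adj u v) :
    sInf {k | 0 < k ∧ ∃ H : Fin k → SimpleGraph V, (∀ i, IntervalGraph (H i)) ∧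
        ∀ u v : V, G.Adj u v ↔ ∀ i, (H i).Adj u v} =
      sInf {k | ∃ (B : Fin k → Type) (_ : ∀ i, Fintype (B i))
        (T : ∀ i, SimpleGraph (B i)) (β : ∀ i, B i → Set V),
        (∀ i, IsTreeDecomp G (T i) (β i) ∧ IsPathGraph (T i)) ∧
        ∀ u v : V, u ≠ v → ¬ G.Adj u v →
          ∃ i, ∀ t, ¬ (u ∈ β i t ∧ v ∈ β i t)} ∧
    sInf {k | ∃ (B : Fin k → Type) (_ : ∀ i, Fintype (B i))
        (T : ∀ i, SimpleGraph (B i)) (β : ∀ i, B i → Set V),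
        (∀ i, IsTreeDecomp G (T i) (β i) ∧ IsPathGraph (T i)) ∧
        ∀ u v : V, u ≠ v → ¬ G.Adj u v →
          ∃ i, ∀ t, ¬ (u ∈ β i t ∧ v ∈ β i t)} =
      sInf {k | 0 < k ∧ ∃ (B : Fin k → Type) (_ : ∀ i, Fintype (B i))
        (T : ∀ i, SimpleGraph (B i)) (S : V → Set (∀ i, B i)),
        (∀ i, IsPathGraph (T i)) ∧
        (∀ v : V, (S v).Nonempty ∧ GeoConvex (boxProdPi T) (S v)) ∧
        ∀ u v : V, u ≠ v → (G.Adj u v ↔ (S u ∩ S v).Nonempty)} := by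
  have : Nonempty V := ⟨hne.choose⟩
  have hA (k : ℕ) := and_congr_right (exists_intervalGraphs_iff_hasBoxRep (G := G) (k := k))
  have hB (k : ℕ) := (exists_pathDecomps_iff_hasBoxRep (G := G) (k := k)).trans
    (and_iff_right_of_imp (HasBoxRep.pos · hne)).symm
  have hC (k : ℕ) := and_congr_right fun (_ : 0 < k) =>
    exists_convexSets_iff_hasBoxRep (G := G) (k := k)
  simp only [hA, hB, hC, and_self]
end

section
/- Let k₁ and k₂ be positive integers, and let G₁ and G₂ be chordal graphs on a common vertex set such that for each i ∈ {1,2} the graph G_i has a representation (T_i,β_i) with pw(T_i) ≤ k_i. If G = G₁ ∩ G₂, then there exists a partition P of V(G) with |P| ≤ (k₁+1)(k₂+1) such that for every part V ∈ P, the induced subgraph G[V] is the intersection of two interval graphs on V (i.e., G[V] has boxicity at most two). -/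
open SimpleGraph

/-!
Fix a representation tree `T` of `Gᵢ` and a path-decomposition of `T` with bags of size at most
`k + 1`. In a component `C` of the part of `T` still to be handled, a path `Q` from a node of `C`
in the first bag meeting `C` to a node of `C` in the last such bag meets every bag meeting `C`.
By the Helly property of subtrees of a tree, two subtrees meeting `Q` intersect iff their traces
on `Q` do, so these vertices of `Gᵢ` induce an interval graph. The remaining subtrees inside `C`
live in `C \ Q`, where every bag has lost a node, so induction on the bag size colours them with
`k` further colours. Thus `Gᵢ` splits into `k + 1` interval graphs, and the pairs of colours
partition `G₁ ∩ G₂` into `(k₁ + 1)(k₂ + 1)` intersections of two interval graphs.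
-/

namespace SimpleGraph

variable {B : Type} {T : SimpleGraph B}

def ConnectedIn (T : SimpleGraph B) (S : Set B) : Prop :=
  ∀ x ∈ S, ∀ y ∈ S, ∃ p : T.Walk x y, ∀ z ∈ p.support, z ∈ S

lemma ConnectedIn.of_induce_connected {S : Set B} (h : (T.induce S).Connected) :
    T.ConnectedIn S := by
  intro x hx y hy
  obtain ⟨p⟩ := h.preconnected ⟨x, hx⟩ ⟨y, hy⟩
  refine ⟨p.map (Embedding.induce S).toHom, fun z hz => ?_⟩
  obtain ⟨z', -, rfl⟩ := List.mem_map.1 ((p.support_map _) ▸ hz)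
  exact z'.2

lemma exists_connectedIn_component {A : Set B} {x₀ : B} (hx₀ : x₀ ∈ A) :
    ∃ C ⊆ A, x₀ ∈ C ∧ T.ConnectedIn C ∧
      ∀ S, T.ConnectedIn S → S ⊆ A → (S ∩ C).Nonempty → S ⊆ C := by
  classical
  let C := {x | ∃ p : T.Walk x₀ x, ∀ z ∈ p.support, z ∈ A}
  have hC : ∀ x (p : T.Walk x₀ x), (∀ z ∈ p.support, z ∈ A) → ∀ z ∈ p.support, z ∈ C :=
    fun x p hp z hz =>
      ⟨p.takeUntil z hz, fun t ht => hp t (p.support_takeUntil_subset_support hz ht)⟩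
  refine ⟨C, fun x ⟨p, hp⟩ => hp x p.end_mem_support, ⟨.nil, by simpa using hx₀⟩, ?_, ?_⟩
  · rintro x ⟨p, hp⟩ y ⟨q, hq⟩
    refine ⟨p.reverse.append q, fun z hz => ?_⟩
    rw [Walk.mem_support_append_iff, Walk.support_reverse, List.mem_reverse] at hz
    exact hz.elim (hC x p hp z) (hC y q hq z)
  · rintro S hS hSA ⟨s, hsS, p, hp⟩ y hy
    obtain ⟨q, hq⟩ := hS s hsS y hy
    refine ⟨p.append q, fun z hz => ?_⟩
    rw [Walk.mem_support_append_iff] at hz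
    exact hz.elim (hp z) (fun hz => hSA (hq z hz))

lemma Walk.connectedIn_support {x y : B} (Q : T.Walk x y) :
    T.ConnectedIn {z | z ∈ Q.support} := by
  classical
  intro z₁ hz₁ z₂ hz₂
  refine ⟨(Q.takeUntil z₁ hz₁).reverse.append (Q.takeUntil z₂ hz₂), fun z hz => ?_⟩
  rw [Walk.mem_support_append_iff, Walk.support_reverse, List.mem_reverse] at hz
  exact hz.elim (fun h => Q.support_takeUntil_subset_support hz₁ h)
    (fun h => Q.support_takeUntil_subset_support hz₂ h)

lemma IsTree.support_subset_of_isPath (hT : T.IsTree) {S : Set B} (hS : T.ConnectedIn S)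
    {x y : B} (hx : x ∈ S) (hy : y ∈ S) {p : T.Walk x y} (hp : p.IsPath) :
    ∀ z ∈ p.support, z ∈ S := by
  classical
  obtain ⟨q, hq⟩ := hS x hx y hy
  rw [(hT.existsUnique_path x y).unique hp q.bypass_isPath]
  exact fun z hz => hq z (q.support_bypass_subset_support hz)

lemma Walk.exists_isPath_meeting_only_at_end {x y : B} (p : T.Walk x y) {R : Set B}
    (hy : y ∈ R) : ∃ g ∈ R, ∃ q : T.Walk x g, q.IsPath ∧ ∀ z ∈ q.support, z ∈ R → z = g := by
  classical
  induction p with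
  | nil => exact ⟨_, hy, .nil, .nil, by simp⟩
  | @cons x x' y h p ih =>
    by_cases hx : x ∈ R
    · exact ⟨x, hx, .nil, .nil, by simp⟩
    obtain ⟨g, hg, q, -, hq⟩ := ih hy
    refine ⟨g, hg, (Walk.cons h q).bypass, Walk.bypass_isPath _, fun z hz hzR => ?_⟩
    rcases List.mem_cons.1 ((Walk.cons h q).support_bypass_subset_support hz) with rfl | hz
    · exact absurd hzR hx
    · exact hq z hz hzR

lemma IsTree.exists_gate (hT : T.IsTree) {R : Set B} (hR : T.ConnectedIn R) (hne : R.Nonempty)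
    (x : B) : ∃ g ∈ R, ∀ r ∈ R, ∀ p : T.Walk x r, p.IsPath → g ∈ p.support := by
  classical
  obtain ⟨r₀, hr₀⟩ := hne
  obtain ⟨g, hg, q, hq, hqR⟩ :=
    (hT.connected.preconnected x r₀).some.exists_isPath_meeting_only_at_end hr₀
  refine ⟨g, hg, fun r hr p hp => ?_⟩
  obtain ⟨s, hs⟩ := hR g hg r hr
  have hsR : ∀ z ∈ s.bypass.support, z ∈ R := fun z hz => hs z (s.support_bypass_subset_support hz)
  have hqs : (q.append s.bypass).IsPath := by
    refine Walk.IsPath.mk' ?_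
    rw [Walk.support_append, List.nodup_append]
    refine ⟨hq.support_nodup, s.bypass_isPath.support_nodup.tail, fun z hz z' hz' hzz' => ?_⟩
    subst hzz'
    obtain rfl := hqR z hz (hsR z (List.mem_of_mem_tail hz'))
    have hnd := s.bypass_isPath.support_nodup
    rw [← Walk.cons_tail_support] at hnd
    exact (List.nodup_cons.1 hnd).1 hz'
  rw [(hT.existsUnique_path x r).unique hp hqs, Walk.mem_support_append_iff]
  exact Or.inl q.end_mem_support

lemma IsTree.inter_inter_nonempty (hT : T.IsTree) {S₁ S₂ S₃ : Set B} (h₁ : T.ConnectedIn S₁)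
    (h₂ : T.ConnectedIn S₂) (h₃ : T.ConnectedIn S₃) (h₁₂ : (S₁ ∩ S₂).Nonempty)
    (h₁₃ : (S₁ ∩ S₃).Nonempty) (h₂₃ : (S₂ ∩ S₃).Nonempty) : (S₁ ∩ S₂ ∩ S₃).Nonempty := by
  obtain ⟨x, hx₁, hx₂⟩ := h₁₂
  obtain ⟨y₁, hy₁, hy₁'⟩ := h₁₃
  obtain ⟨y₂, hy₂, hy₂'⟩ := h₂₃
  obtain ⟨g, hg, hgate⟩ := hT.exists_gate h₃ ⟨y₁, hy₁'⟩ x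
  obtain ⟨p₁, hp₁, -⟩ := hT.existsUnique_path x y₁
  obtain ⟨p₂, hp₂, -⟩ := hT.existsUnique_path x y₂
  exact ⟨g, ⟨hT.support_subset_of_isPath h₁ hx₁ hy₁ hp₁ g (hgate y₁ hy₁' p₁ hp₁),
    hT.support_subset_of_isPath h₂ hx₂ hy₂ hp₂ g (hgate y₂ hy₂' p₂ hp₂)⟩, hg⟩

namespace Walk

variable {x y : B}

lemma exists_mem_support_eq_of_mem_uIcc {G : SimpleGraph B} (f : B → ℕ)
    (hf : ∀ x y, G.Adj x y → f y ≤ f x + 1) {x y : B} (p : G.Walk x y) {m : ℕ}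
    (hm : m ∈ Set.uIcc (f x) (f y)) : ∃ z ∈ p.support, f z = m := by
  induction p with
  | nil => exact ⟨_, start_mem_support _, (by simpa using hm : m = _).symm⟩
  | @cons x x' y h p ih =>
    by_cases hxm : f x = m
    · exact ⟨x, start_mem_support _, hxm⟩
    have := hf x x' h
    have := hf x' x h.symm
    obtain ⟨z, hz, hzm⟩ := ih (by simp only [Set.mem_uIcc] at hm ⊢; omega)
    exact ⟨z, by simp [hz], hzm⟩

-- The bound `i ≤ Q.length` matters: `getVert` stays at the endpoint past the end of the walk.
def indicesIn (Q : T.Walk x y) (S : Set B) : Set ℕ :=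
  {i | i ≤ Q.length ∧ Q.getVert i ∈ S}

lemma bddAbove_indicesIn (Q : T.Walk x y) (S : Set B) : BddAbove (Q.indicesIn S) :=
  ⟨Q.length, fun _ hi => hi.1⟩

lemma indicesIn_nonempty_iff {Q : T.Walk x y} {S : Set B} :
    (Q.indicesIn S).Nonempty ↔ ∃ z ∈ S, z ∈ Q.support := by
  constructor
  · rintro ⟨i, -, hi⟩
    exact ⟨_, hi, Q.getVert_mem_support i⟩
  · rintro ⟨z, hz, hzQ⟩
    obtain ⟨i, rfl, hi⟩ := mem_support_iff_exists_getVert.1 hzQ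
    exact ⟨i, hi, hz⟩

lemma getVert_mem_of_le_of_le (hT : T.IsTree) {Q : T.Walk x y} (hQ : Q.IsPath) {S : Set B}
    (hS : T.ConnectedIn S) {i j m : ℕ} (hi : Q.getVert i ∈ S) (hj : Q.getVert j ∈ S)
    (him : i ≤ m) (hmj : m ≤ j) : Q.getVert m ∈ S := by
  have hi' : (Q.take j).getVert i ∈ S := by rwa [take_getVert, min_eq_right (him.trans hmj)]
  have hm : Q.getVert m = ((Q.take j).drop i).getVert (m - i) := by
    rw [drop_getVert, take_getVert, Nat.add_sub_cancel' him, min_eq_right hmj]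
  rw [hm]
  exact hT.support_subset_of_isPath hS hi' hj ((hQ.take j).drop i) _ (getVert_mem_support _ _)

lemma inter_nonempty_iff_indicesIn (hT : T.IsTree) {Q : T.Walk x y} (hQ : Q.IsPath)
    {S₁ S₂ : Set B} (h₁ : T.ConnectedIn S₁) (h₂ : T.ConnectedIn S₂)
    (hne₁ : (Q.indicesIn S₁).Nonempty) (hne₂ : (Q.indicesIn S₂).Nonempty) :
    (S₁ ∩ S₂).Nonempty ↔ sInf (Q.indicesIn S₁) ≤ sSup (Q.indicesIn S₂) ∧
      sInf (Q.indicesIn S₂) ≤ sSup (Q.indicesIn S₁) := by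
  have hinf₁ := Nat.sInf_mem hne₁
  have hinf₂ := Nat.sInf_mem hne₂
  have hsup₁ := Nat.sSup_mem hne₁ (Q.bddAbove_indicesIn S₁)
  have hsup₂ := Nat.sSup_mem hne₂ (Q.bddAbove_indicesIn S₂)
  constructor
  · intro h₁₂
    obtain ⟨z, ⟨hz₁, hz₂⟩, hzQ⟩ := hT.inter_inter_nonempty h₁ h₂ Q.connectedIn_support h₁₂
      (indicesIn_nonempty_iff.1 hne₁) (indicesIn_nonempty_iff.1 hne₂)
    obtain ⟨m, rfl, hm⟩ := mem_support_iff_exists_getVert.1 hzQ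
    have hm₁ : m ∈ Q.indicesIn S₁ := ⟨hm, hz₁⟩
    have hm₂ : m ∈ Q.indicesIn S₂ := ⟨hm, hz₂⟩
    exact ⟨(Nat.sInf_le hm₁).trans (le_csSup (Q.bddAbove_indicesIn S₂) hm₂),
      (Nat.sInf_le hm₂).trans (le_csSup (Q.bddAbove_indicesIn S₁) hm₁)⟩
  · rintro ⟨h₁₂, h₂₁⟩
    rcases le_total (sInf (Q.indicesIn S₁)) (sInf (Q.indicesIn S₂)) with h | h
    · exact ⟨_, getVert_mem_of_le_of_le hT hQ h₁ hinf₁.2 hsup₁.2 h h₂₁, hinf₂.2⟩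
    · exact ⟨_, hinf₁.2, getVert_mem_of_le_of_le hT hQ h₂ hinf₂.2 hsup₂.2 h h₁₂⟩

end Walk

end SimpleGraph

variable {B : Type} {T : SimpleGraph B}

/-- A path-decomposition of the subforest `T[A]` with bags indexed by `ℕ`; `w` bounds the size of
the bags, so the width is `w - 1`. -/
structure IsPathDecompOn (T : SimpleGraph B) (A : Set B) (X : ℕ → Set B) (w : ℕ) : Prop where
  subset : ∀ i, X i ⊆ A
  bddAbove : BddAbove {i | (X i).Nonempty}
  cover : ∀ t ∈ A, ∃ i, t ∈ X i
  ordConnected : ∀ t, {i | t ∈ X i}.OrdConnected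
  adj : ∀ s ∈ A, ∀ t ∈ A, T.Adj s t → ∃ i, s ∈ X i ∧ t ∈ X i
  ncard_le : ∀ i, (X i).ncard ≤ w

namespace IsPathDecompOn

variable {A : Set B} {X : ℕ → Set B} {w : ℕ}

lemma restrict (hX : IsPathDecompOn T A X w) {A' : Set B} (hA' : A' ⊆ A) {w' : ℕ}
    (hw' : ∀ i, (X i ∩ A').ncard ≤ w') : IsPathDecompOn T A' (fun i => X i ∩ A') w' where
  subset _ := Set.inter_subset_right
  bddAbove := hX.bddAbove.mono fun _ h => h.mono Set.inter_subset_left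
  cover t ht := (hX.cover t (hA' ht)).imp fun _ hi => ⟨hi, ht⟩
  ordConnected t := ⟨fun _ hi _ hj _ hm => ⟨(hX.ordConnected t).out hi.1 hj.1 hm, hi.2⟩⟩
  adj s hs t ht hst := (hX.adj s (hA' hs) t (hA' ht) hst).imp fun _ h => ⟨⟨h.1, hs⟩, h.2, ht⟩
  ncard_le := hw'

lemma exists_mem_support_of_mem_uIcc (hX : IsPathDecompOn T A X w) {x y : B} (p : T.Walk x y)
    (hp : ∀ z ∈ p.support, z ∈ A) {i j m : ℕ} (hi : x ∈ X i) (hj : y ∈ X j)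
    (hm : m ∈ Set.uIcc i j) : ∃ z ∈ p.support, z ∈ X m := by
  induction p generalizing i with
  | nil => exact ⟨_, Walk.start_mem_support _, (hX.ordConnected _).uIcc_subset hi hj hm⟩
  | @cons x x' y h p ih =>
    obtain ⟨l, hxl, hx'l⟩ := hX.adj x (hp x (Walk.start_mem_support _)) x'
      (hp x' (by simp)) h
    by_cases hml : m ∈ Set.uIcc i l
    · exact ⟨x, Walk.start_mem_support _, (hX.ordConnected x).uIcc_subset hi hxl hml⟩
    · obtain ⟨z, hz, hzm⟩ := ih (fun z hz => hp z (by simp [hz])) hx'l hj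
        (by simp only [Set.mem_uIcc] at hm hml ⊢; omega)
      exact ⟨z, by simp [hz], hzm⟩

/-- The path joins a vertex of `C` in the first bag meeting `C` to one in the last such bag. -/
lemma exists_isPath_meeting_bags (hX : IsPathDecompOn T A X w) {C : Set B} (hCA : C ⊆ A)
    (hC : T.ConnectedIn C) (hne : C.Nonempty) :
    ∃ (x y : B) (Q : T.Walk x y), Q.IsPath ∧
      ∀ i, (X i ∩ C).Nonempty → ∃ t ∈ Q.support, t ∈ X i := by
  classical
  set I := {i | (X i ∩ C).Nonempty}
  have hIne : I.Nonempty := by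
    obtain ⟨t, ht⟩ := hne
    obtain ⟨i, hi⟩ := hX.cover t (hCA ht)
    exact ⟨i, t, hi, ht⟩
  have hIbdd : BddAbove I := hX.bddAbove.mono fun _ h => h.mono Set.inter_subset_left
  obtain ⟨x, hxX, hxC⟩ := Nat.sInf_mem hIne
  obtain ⟨y, hyX, hyC⟩ := Nat.sSup_mem hIne hIbdd
  obtain ⟨p, hp⟩ := hC x hxC y hyC
  refine ⟨x, y, p.bypass, p.bypass_isPath, fun i hi => ?_⟩
  exact hX.exists_mem_support_of_mem_uIcc p.bypass
    (fun z hz => hCA (hp z (p.support_bypass_subset_support hz))) hxX hyX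
    (Set.Icc_subset_uIcc ⟨Nat.sInf_le hi, le_csSup hIbdd hi⟩)

end IsPathDecompOn

variable {V : Type}

def IntervalColorable (S : V → Set B) (A : Set B) (w : ℕ) : Prop :=
  ∃ c a b : V → ℕ, (∀ v, S v ⊆ A → c v < w ∧ a v ≤ b v) ∧
    ∀ u v, S u ⊆ A → S v ⊆ A → c u = c v →
      ((S u ∩ S v).Nonempty ↔ a u ≤ b v ∧ a v ≤ b u)

namespace IntervalColorable

variable {S : V → Set B} {w : ℕ}

lemma of_eq_empty (hS : ∀ v, (S v).Nonempty) : IntervalColorable S ∅ w :=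
  ⟨0, 0, 0, fun v hv => absurd (hv (hS v).some_mem) id,
    fun u _ hu => absurd (hu (hS u).some_mem) id⟩

lemma union [Finite V] {A₁ A₂ : Set B} (hdisj : Disjoint A₁ A₂)
    (hsep : ∀ v, S v ⊆ A₁ ∪ A₂ → S v ⊆ A₁ ∨ S v ⊆ A₂)
    (h₁ : IntervalColorable S A₁ w) (h₂ : IntervalColorable S A₂ w) :
    IntervalColorable S (A₁ ∪ A₂) w := by
  classical
  obtain ⟨c₁, a₁, b₁, hcab₁, hiff₁⟩ := h₁
  obtain ⟨c₂, a₂, b₂, hcab₂, hiff₂⟩ := h₂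
  obtain ⟨K, hK⟩ := (Set.finite_range b₁).bddAbove
  have hbK : ∀ v, b₁ v < K + 1 := fun v => Nat.lt_succ_of_le (hK ⟨v, rfl⟩)
  have hdisj' : ∀ u v, S u ⊆ A₁ → S v ⊆ A₂ → ¬ (S u ∩ S v).Nonempty :=
    fun u v hu hv ⟨z, hzu, hzv⟩ => Set.disjoint_left.1 hdisj (hu hzu) (hv hzv)
  -- the intervals of the second part are shifted past all those of the first
  refine ⟨fun v => if S v ⊆ A₁ then c₁ v else c₂ v,
    fun v => if S v ⊆ A₁ then a₁ v else a₂ v + (K + 1),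
    fun v => if S v ⊆ A₁ then b₁ v else b₂ v + (K + 1), fun v hv => ?_, fun u v hu hv hc => ?_⟩
  · by_cases h : S v ⊆ A₁
    · simpa only [h, ↓reduceIte] using hcab₁ v h
    · simpa only [h, ↓reduceIte, add_le_add_iff_right] using hcab₂ v ((hsep v hv).resolve_left h)
  · by_cases hu₁ : S u ⊆ A₁ <;> by_cases hv₁ : S v ⊆ A₁ <;>
      simp only [hu₁, hv₁, ↓reduceIte] at hc ⊢
    · exact hiff₁ u v hu₁ hv₁ hc
    · exact iff_of_false (hdisj' u v hu₁ ((hsep v hv).resolve_left hv₁))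
        (by have := hbK u; omega)
    · exact iff_of_false (fun h => hdisj' v u hv₁ ((hsep u hu).resolve_left hu₁)
        (Set.inter_comm (S u) (S v) ▸ h)) (by have := hbK v; omega)
    · simpa only [add_le_add_iff_right] using
        hiff₂ u v ((hsep u hu).resolve_left hu₁) ((hsep v hv).resolve_left hv₁) hc

lemma of_diff_support (hT : T.IsTree) (hS : ∀ v, T.ConnectedIn (S v)) {x y : B}
    {Q : T.Walk x y} (hQ : Q.IsPath) {C : Set B}
    (h : IntervalColorable S (C \ {z | z ∈ Q.support}) w) : IntervalColorable S C (w + 1) := by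
  classical
  obtain ⟨c, a, b, hcab, hiff⟩ := h
  have hoff : ∀ v, S v ⊆ C → ¬ (Q.indicesIn (S v)).Nonempty → S v ⊆ C \ {z | z ∈ Q.support} :=
    fun v hv hQv z hz => ⟨hv hz, fun hzQ => hQv (Walk.indicesIn_nonempty_iff.2 ⟨z, hz, hzQ⟩)⟩
  refine ⟨fun v => if (Q.indicesIn (S v)).Nonempty then 0 else c v + 1,
    fun v => if (Q.indicesIn (S v)).Nonempty then sInf (Q.indicesIn (S v)) else a v,
    fun v => if (Q.indicesIn (S v)).Nonempty then sSup (Q.indicesIn (S v)) else b v,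
    fun v hv => ?_, fun u v hu hv hc => ?_⟩
  · by_cases hQv : (Q.indicesIn (S v)).Nonempty
    · simp only [hQv, ↓reduceIte]
      exact ⟨w.succ_pos, csInf_le_csSup hQv (OrderBot.bddBelow _) (Q.bddAbove_indicesIn _)⟩
    · simpa only [hQv, ↓reduceIte, add_lt_add_iff_right] using hcab v (hoff v hv hQv)
  · by_cases hQu : (Q.indicesIn (S u)).Nonempty <;> by_cases hQv : (Q.indicesIn (S v)).Nonempty <;>
      simp only [hQu, hQv, ↓reduceIte] at hc ⊢
    · exact Walk.inter_nonempty_iff_indicesIn hT hQ (hS u) (hS v) hQu hQv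
    · exact absurd hc (Nat.succ_ne_zero _).symm
    · exact absurd hc (Nat.succ_ne_zero _)
    · exact hiff u v (hoff u hu hQu) (hoff v hv hQv) (Nat.succ_injective hc)

end IntervalColorable

lemma IsPathDecompOn.ncard_inter_sdiff_le [Finite B] {A : Set B} {X : ℕ → Set B} {w : ℕ}
    (hX : IsPathDecompOn T A X w) {C Q : Set B}
    (hQ : ∀ i, (X i ∩ C).Nonempty → ∃ t ∈ Q, t ∈ X i) (i : ℕ) :
    (X i ∩ (C \ Q)).ncard ≤ w - 1 := by
  rcases (X i ∩ C).eq_empty_or_nonempty with h | h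
  · have : X i ∩ (C \ Q) = ∅ :=
      Set.eq_empty_of_subset_empty (h ▸ Set.inter_subset_inter_right _ Set.sdiff_subset)
    simp [this]
  obtain ⟨t, htQ, htX⟩ := hQ i h
  calc (X i ∩ (C \ Q)).ncard ≤ (X i \ {t}).ncard :=
        Set.ncard_le_ncard (fun z hz => ⟨hz.1, fun hzt => hz.2.2 (hzt ▸ htQ)⟩) (Set.toFinite _)
    _ = (X i).ncard - 1 := Set.ncard_sdiff_singleton_of_mem htX
    _ ≤ w - 1 := Nat.sub_le_sub_right (hX.ncard_le i) 1

theorem IsPathDecompOn.intervalColorable [Finite V] [Finite B] (hT : T.IsTree) {S : V → Set B}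
    (hSne : ∀ v, (S v).Nonempty) (hS : ∀ v, T.ConnectedIn (S v)) {A : Set B} {X : ℕ → Set B}
    {w : ℕ} (hX : IsPathDecompOn T A X w) : IntervalColorable S A w := by
  induction A using WellFoundedLT.induction generalizing X w with
  | _ A ih =>
    rcases A.eq_empty_or_nonempty with rfl | ⟨x₀, hx₀⟩
    · exact IntervalColorable.of_eq_empty hSne
    obtain ⟨C, hCA, hx₀C, hC, hsat⟩ := exists_connectedIn_component (T := T) hx₀
    obtain ⟨x, y, Q, hQ, hQX⟩ := hX.exists_isPath_meeting_bags hCA hC ⟨x₀, hx₀C⟩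
    obtain ⟨i₀, hi₀⟩ := hX.cover x₀ hx₀
    obtain ⟨t₀, ht₀Q, ht₀X⟩ := hQX i₀ ⟨x₀, hi₀, hx₀C⟩
    have hw : 1 ≤ w :=
      ((Set.ncard_pos (Set.toFinite _)).2 ⟨t₀, ht₀X⟩).trans_le (hX.ncard_le i₀)
    have hCQ : IntervalColorable S (C \ {z | z ∈ Q.support}) (w - 1) :=
      ih _ ⟨Set.sdiff_subset.trans hCA, fun h => (h (hX.subset i₀ ht₀X)).2 ht₀Q⟩
        (hX.restrict (Set.sdiff_subset.trans hCA) (hX.ncard_inter_sdiff_le hQX))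
    have hAC : IntervalColorable S (A \ C) w :=
      ih _ ⟨Set.sdiff_subset, fun h => (h (hCA hx₀C)).2 hx₀C⟩ (hX.restrict Set.sdiff_subset
        fun i => (Set.ncard_le_ncard Set.inter_subset_left (Set.toFinite _)).trans (hX.ncard_le i))
    have hC' := hCQ.of_diff_support hT hS hQ
    rw [Nat.sub_add_cancel hw] at hC'
    rw [← Set.union_sdiff_cancel hCA]
    refine hC'.union Set.disjoint_sdiff_right (fun v hv => ?_) hAC
    rw [Set.union_sdiff_cancel hCA] at hv
    by_cases hvC : (S v ∩ C).Nonempty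
    · exact Or.inl (hsat _ (hS v) hv hvC)
    · exact Or.inr fun z hz => ⟨hv hz, fun hzC => hvC ⟨z, hz, hzC⟩⟩

lemma PathwidthLE.exists_isPathDecompOn [Finite B] {k : ℕ} (h : PathwidthLE T k) :
    ∃ X, IsPathDecompOn T Set.univ X (k + 1) := by
  obtain ⟨B', _, P, β, ⟨n, ⟨e⟩⟩, hdec, hcard⟩ := h
  have he : ∀ x y, P.Adj x y → ((e y : Fin n) : ℕ) ≤ e x + 1 := fun x y hxy => by
    have := pathGraph_adj.1 (e.map_adj_iff.2 hxy); omega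
  refine ⟨fun i => {t | ∃ b, ((e b : Fin n) : ℕ) = i ∧ t ∈ β b}, ⟨fun _ => Set.subset_univ _,
    ⟨n, ?_⟩, fun t _ => ?_, fun t => ⟨?_⟩, fun s _ t _ hst => ?_, fun i => ?_⟩⟩
  · rintro _ ⟨_, b, rfl, _⟩
    exact (e b).isLt.le
  · obtain ⟨b, hb⟩ := hdec.exists_bag t
    exact ⟨_, b, rfl, hb⟩
  · rintro _ ⟨b₁, rfl, h₁⟩ _ ⟨b₂, rfl, h₂⟩ m hm
    obtain ⟨p, hp⟩ := ConnectedIn.of_induce_connected (hdec.support_connected t) b₁ h₁ b₂ h₂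
    obtain ⟨z, hz, hzm⟩ := p.exists_mem_support_eq_of_mem_uIcc _ he (Set.Icc_subset_uIcc hm)
    exact ⟨z, hzm, hp z hz⟩
  · obtain ⟨b, hs, ht⟩ := hdec.adj_bag hst
    exact ⟨_, ⟨b, rfl, hs⟩, ⟨b, rfl, ht⟩⟩
  · rcases Set.eq_empty_or_nonempty {t | ∃ b, ((e b : Fin n) : ℕ) = i ∧ t ∈ β b} with
      h | ⟨_, b₀, hb₀, _⟩
    · simp [h]
    refine (Set.ncard_le_ncard ?_ (Set.toFinite _)).trans (hcard b₀)
    rintro t ⟨b, hb, ht⟩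
    rwa [e.injective (Fin.ext (hb.trans hb₀.symm))] at ht

theorem IsRepresentation.exists_intervalColoring [Finite V] [Finite B] {G : SimpleGraph V}
    {β : B → Set V} (hrep : IsRepresentation G T β) {k : ℕ} (hpw : PathwidthLE T k) :
    ∃ c a b : V → ℕ, (∀ v, c v ≤ k ∧ a v ≤ b v) ∧
      ∀ u v, u ≠ v → c u = c v → (G.Adj u v ↔ a u ≤ b v ∧ a v ≤ b u) := by
  obtain ⟨X, hX⟩ := hpw.exists_isPathDecompOn
  obtain ⟨c, a, b, hcab, hiff⟩ := hX.intervalColorable hrep.isTree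
    (fun v => Set.nonempty_coe_sort.1 (hrep.support_connected v).nonempty)
    (fun v => ConnectedIn.of_induce_connected (hrep.support_connected v))
  exact ⟨c, a, b, fun v => (hcab v (Set.subset_univ _)).imp_left Nat.le_of_lt_succ,
    fun u v huv hc => (hrep.adj_iff u v huv).trans
      (hiff u v (Set.subset_univ _) (Set.subset_univ _) hc)⟩

def natIntervalGraph {α : Type} (a b : α → ℕ) : SimpleGraph α where
  Adj u v := u ≠ v ∧ a u ≤ b v ∧ a v ≤ b u
  symm := ⟨fun _ _ h => ⟨h.1.symm, h.2.2, h.2.1⟩⟩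
  loopless := ⟨fun _ h => h.1 rfl⟩

lemma intervalGraph_natIntervalGraph {α : Type} {a b : α → ℕ} (hab : ∀ v, a v ≤ b v) :
    IntervalGraph (natIntervalGraph a b) := by
  refine ⟨fun v => Set.Icc (a v : ℝ) (b v), fun v => ⟨a v, b v, by exact_mod_cast hab v, rfl⟩,
    fun u v huv => ?_⟩
  show (u ≠ v ∧ _) ↔ _
  simp only [Set.Icc_inter_Icc, Set.nonempty_Icc, max_le_iff, le_min_iff, Nat.cast_le]
  have := hab u
  have := hab v
  tauto

lemma exists_partition_colorClasses [Fintype V] {ι : Type} (col : V → ι)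
    (s : Finset ι) (hs : ∀ v, col v ∈ s) :
    ∃ P : Finset (Set V), (∀ v, ∃! S, S ∈ P ∧ v ∈ S) ∧ P.card ≤ s.card ∧
      ∀ S ∈ P, ∀ u ∈ S, ∀ v ∈ S, col u = col v := by
  classical
  refine ⟨(Finset.univ.image col).image fun i => {v | col v = i}, fun v => ?_, ?_, ?_⟩
  · refine ⟨{u | col u = col v}, ⟨by simp, rfl⟩, ?_⟩
    rintro _ ⟨hS, hv⟩
    obtain ⟨_, ⟨w, -, rfl⟩, rfl⟩ := by simpa using hS
    simp_all
  · exact Finset.card_image_le.trans (Finset.card_le_card (by simpa [Finset.subset_iff] using hs))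
  · simp only [Finset.mem_image]
    rintro _ ⟨_, -, rfl⟩ u hu v hv
    exact hu.trans hv.symm

theorem stmt_15_general {V : Type} [Fintype V] (k₁ k₂ : ℕ) (G₁ G₂ : SimpleGraph V)
    (hrep₁ : ∃ (B₁ : Type) (_ : Fintype B₁) (T₁ : SimpleGraph B₁) (β₁ : B₁ → Set V),
      IsRepresentation G₁ T₁ β₁ ∧ PathwidthLE T₁ k₁)
    (hrep₂ : ∃ (B₂ : Type) (_ : Fintype B₂) (T₂ : SimpleGraph B₂) (β₂ : B₂ → Set V),
      IsRepresentation G₂ T₂ β₂ ∧ PathwidthLE T₂ k₂)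
    (G : SimpleGraph V) (hG : G = G₁ ⊓ G₂) :
    ∃ P : Finset (Set V), (∀ v : V, ∃! S, S ∈ P ∧ v ∈ S) ∧
      P.card ≤ (k₁ + 1) * (k₂ + 1) ∧
      ∀ S ∈ P, ∃ I₁ I₂ : SimpleGraph S, IntervalGraph I₁ ∧ IntervalGraph I₂ ∧
        ∀ u v : S, (G.induce S).Adj u v ↔ (I₁.Adj u v ∧ I₂.Adj u v) := by
  obtain ⟨B₁, _, T₁, β₁, hr₁, hpw₁⟩ := hrep₁
  obtain ⟨B₂, _, T₂, β₂, hr₂, hpw₂⟩ := hrep₂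
  obtain ⟨c₁, a₁, b₁, hcab₁, hadj₁⟩ := hr₁.exists_intervalColoring hpw₁
  obtain ⟨c₂, a₂, b₂, hcab₂, hadj₂⟩ := hr₂.exists_intervalColoring hpw₂
  obtain ⟨P, hpart, hcard, hcol⟩ := exists_partition_colorClasses (fun v => (c₁ v, c₂ v))
    (Finset.range (k₁ + 1) ×ˢ Finset.range (k₂ + 1))
    (fun v => by simp [Nat.lt_succ_of_le (hcab₁ v).1, Nat.lt_succ_of_le (hcab₂ v).1])
  refine ⟨P, hpart, by simpa using hcard, fun S hS => ⟨natIntervalGraph (a₁ ·) (b₁ ·),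
    natIntervalGraph (a₂ ·) (b₂ ·), intervalGraph_natIntervalGraph fun v => (hcab₁ v).2,
    intervalGraph_natIntervalGraph fun v => (hcab₂ v).2, fun u v => ?_⟩⟩
  obtain rfl | huv := eq_or_ne u v
  · simp
  have huv' : (u : V) ≠ v := Subtype.coe_ne_coe.2 huv
  obtain ⟨hc₁, hc₂⟩ := Prod.ext_iff.1 (hcol S hS u u.2 v v.2)
  subst hG
  exact (and_congr (hadj₁ u v huv' hc₁) (hadj₂ u v huv' hc₂)).trans
    ⟨fun h => ⟨⟨huv, h.1⟩, huv, h.2⟩, fun h => ⟨h.1.2, h.2.2⟩⟩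

/-- If `G₁, G₂` are chordal graphs with representation trees of path-width at
most `k₁, k₂` respectively and `G = G₁ ∩ G₂`, then `V(G)` can be partitioned into at most
`(k₁+1)(k₂+1)` parts, each of which induces a graph of boxicity at most two. -/
theorem stmt_15 {V : Type} [Fintype V] (k₁ k₂ : ℕ) (hk₁ : 0 < k₁) (hk₂ : 0 < k₂)
    (G₁ G₂ : SimpleGraph V) (hc₁ : Chordal G₁) (hc₂ : Chordal G₂)
    (hrep₁ : ∃ (B₁ : Type) (_ : Fintype B₁) (T₁ : SimpleGraph B₁) (β₁ : B₁ → Set V),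
      IsRepresentation G₁ T₁ β₁ ∧ PathwidthLE T₁ k₁)
    (hrep₂ : ∃ (B₂ : Type) (_ : Fintype B₂) (T₂ : SimpleGraph B₂) (β₂ : B₂ → Set V),
      IsRepresentation G₂ T₂ β₂ ∧ PathwidthLE T₂ k₂)
    (G : SimpleGraph V) (hG : G = G₁ ⊓ G₂) :
    ∃ P : Finset (Set V), (∀ v : V, ∃! S, S ∈ P ∧ v ∈ S) ∧
      P.card ≤ (k₁ + 1) * (k₂ + 1) ∧
      ∀ S ∈ P, ∃ I₁ I₂ : SimpleGraph S, IntervalGraph I₁ ∧ IntervalGraph I₂ ∧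
        ∀ u v : S, (G.induce S).Adj u v ↔ (I₁.Adj u v ∧ I₂.Adj u v) :=
  stmt_15_general k₁ k₂ G₁ G₂ hrep₁ hrep₂ G hG
end
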